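/- arXiv:2504.03456 — 7 statements merged into one kernel-verified Lean document; each statement's English description precedes it below -/
import Mathlib

section
/- Let n ≥ 2 and let d = (d_1, …, d_n) be integers with 2 ≤ d_1 ≤ ⋯ ≤ d_n. Then c(d) = 0 if and only if d_n − 1 > ∑_{i=1}^{n−1} (d_i − 1). -/
/-!
Write `e i = d i - 1` and `E = ∑ i, e i`. Every monomial of `∏ i, (∑_{j ≠ i} h_j)^(e i)` has
`h_l`-degree at most `∑_{i ≠ l} e i`, since the factor `i = l` omits `h_l`; so `c(d) = 0` when
`e l` exceeds that sum. Conversely, if every `e i` is at most `k` with `2 k ≤ E`, cut `ℤ/E` into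
consecutive blocks of lengths `e i` and rotate by `k`: no position stays in its block. Taking from
the factor of the block of `p` the variable of the block of `p + k` produces `h^e`, and since all
coefficients are natural numbers nothing can cancel it. With `k = e n`, the largest, the two
cases are complementary.
-/

/-- `cCoeff d` is the coefficient of the monomial `h₁^(d₁-1) ⋯ hₙ^(dₙ-1)` in the
polynomial `∏ i, (∑_{j ≠ i} h_j)^(dᵢ-1)` in `ℤ[h₁, …, hₙ]`. -/
noncomputable def cCoeff {n : ℕ} (d : Fin n → ℕ) : ℤ :=
  MvPolynomial.coeff (Finsupp.equivFunOnFinite.symm fun i => d i - 1)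
    (∏ i : Fin n,
      (∑ j ∈ Finset.univ.erase i, (MvPolynomial.X j : MvPolynomial (Fin n) ℤ)) ^ (d i - 1))

open Finset MvPolynomial

section Positivity

variable {σ ι R : Type*} [CommSemiring R] [PartialOrder R] [CanonicallyOrderedAdd R]

lemma coeff_mul_coeff_le_coeff_add_mul (a b : σ →₀ ℕ) (p q : MvPolynomial σ R) :
    coeff a p * coeff b q ≤ coeff (a + b) (p * q) := by
  classical
  rw [coeff_mul]
  exact single_le_sum (f := fun x => coeff x.1 p * coeff x.2 q) (fun _ _ => zero_le (α := R))
    (mem_antidiagonal.mpr rfl : (a, b) ∈ antidiagonal (a + b))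

lemma prod_coeff_le_coeff_prod (s : Finset ι) (m : ι → σ →₀ ℕ)
    (f : ι → MvPolynomial σ R) :
    ∏ i ∈ s, coeff (m i) (f i) ≤ coeff (∑ i ∈ s, m i) (∏ i ∈ s, f i) := by
  classical
  induction s using Finset.induction_on with
  | empty => simp
  | insert a s ha ih =>
    rw [prod_insert ha, sum_insert ha, prod_insert ha]
    exact (mul_le_mul' le_rfl ih).trans (coeff_mul_coeff_le_coeff_add_mul _ _ _ _)

lemma one_le_coeff_prod_sum_X [Fintype ι] (s : ι → Finset σ) (g : ι → σ)
    (hg : ∀ i, g i ∈ s i) :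
    1 ≤ coeff (∑ i, Finsupp.single (g i) 1) (∏ i, ∑ j ∈ s i, (X j : MvPolynomial σ R)) :=
  calc (1 : R)
      = ∏ i, coeff (Finsupp.single (g i) 1) (∑ j ∈ s i, (X j : MvPolynomial σ R)) := by
        classical simp [coeff_sum, coeff_X, Finsupp.single_left_inj one_ne_zero, hg]
    _ ≤ _ := prod_coeff_le_coeff_prod _ _ _

end Positivity

section Blocks

variable {n : ℕ} (e : Fin n → ℕ)

/-- `Fin (∑ i, e i)` is cut into consecutive blocks of lengths `e 0, e 1, …`. -/
def blockOf (p : Fin (∑ i, e i)) : Fin n := (finSigmaFinEquiv.symm p).1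

@[to_additive]
lemma prod_blockOf {M : Type*} [CommMonoid M] (g : Fin n → M) :
    ∏ p, g (blockOf e p) = ∏ i, g i ^ e i := by
  rw [← finSigmaFinEquiv.prod_comp, Fintype.prod_sigma]
  simp [blockOf]

lemma lt_add_of_blockOf_eq {p q : Fin (∑ i, e i)} (h : blockOf e p = blockOf e q) :
    (q : ℕ) < p + e (blockOf e p) := by
  obtain ⟨⟨i, a⟩, rfl⟩ := finSigmaFinEquiv.surjective p
  obtain ⟨⟨j, b⟩, rfl⟩ := finSigmaFinEquiv.surjective q
  simp only [blockOf, Equiv.symm_apply_apply] at h ⊢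
  subst h
  simp only [finSigmaFinEquiv_apply]
  omega

lemma exists_perm_blockOf_ne {k : ℕ} (hk : ∀ i, e i ≤ k) (hkE : 2 * k ≤ ∑ i, e i) :
    ∃ τ : Equiv.Perm (Fin (∑ i, e i)), ∀ p, blockOf e (τ p) ≠ blockOf e p := by
  rcases Nat.eq_zero_or_pos (∑ i, e i) with hE | hE
  · exact ⟨1, fun p => absurd p.isLt (by omega)⟩
  have : NeZero (∑ i, e i) := ⟨hE.ne'⟩
  -- A block has length at most `k ≤ E - k`, so rotating by `k` leaves every block.
  refine ⟨Equiv.addRight ⟨k, by omega⟩, fun p hp => ?_⟩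
  have hq := lt_add_of_blockOf_eq e hp
  have hp' := lt_add_of_blockOf_eq e hp.symm
  have hkp := hk (blockOf e p)
  rw [hp] at hq
  simp only [Equiv.coe_addRight, Fin.val_add] at hq hp'
  rcases lt_or_ge (p + k) (∑ i, e i) with h | h
  · rw [Nat.mod_eq_of_lt h] at hq hp'
    omega
  · rw [Nat.mod_eq_sub_mod h, Nat.mod_eq_of_lt (by omega)] at hq hp'
    omega

end Blocks

section CPoly

variable {σ R : Type*} [CommSemiring R]

lemma degreeOf_X_le_one (l j : σ) : degreeOf l (X j : MvPolynomial σ R) ≤ 1 :=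
  degreeOf_le_iff.mpr fun m hm => by
    classical
    rw [mem_singleton.mp (support_monomial_subset hm), Finsupp.single_apply]
    split <;> omega

lemma degreeOf_sum_X_le_one (l : σ) (s : Finset σ) :
    degreeOf l (∑ j ∈ s, (X j : MvPolynomial σ R)) ≤ 1 :=
  (degreeOf_sum_le _ _ _).trans (Finset.sup_le fun j _ => degreeOf_X_le_one l j)

lemma degreeOf_sum_X_of_notMem {l : σ} {s : Finset σ} (hl : l ∉ s) :
    degreeOf l (∑ j ∈ s, (X j : MvPolynomial σ R)) = 0 :=
  Nat.eq_zero_of_le_zero <| (degreeOf_sum_le _ _ _).trans <| Finset.sup_le fun j hj => by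
    rw [← pow_one (X j), degreeOf_X_pow_of_ne 1 (ne_of_mem_of_not_mem hj hl).symm]

variable (R) in
noncomputable def cPoly {n : ℕ} (e : Fin n → ℕ) : MvPolynomial (Fin n) R :=
  ∏ i, (∑ j ∈ univ.erase i, X j) ^ e i

variable {n : ℕ} (e : Fin n → ℕ)

lemma map_cPoly {S : Type*} [CommSemiring S] (φ : R →+* S) : map φ (cPoly R e) = cPoly S e := by
  simp [cPoly, map_prod, map_sum]

lemma cCoeff_eq_natCast_coeff_cPoly (d : Fin n → ℕ) :
    cCoeff d = (((cPoly ℕ fun i => d i - 1).coeff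
      (Finsupp.equivFunOnFinite.symm fun i => d i - 1) : ℕ) : ℤ) := by
  rw [← eq_natCast (Nat.castRingHom ℤ), ← coeff_map, map_cPoly]
  rfl

lemma degreeOf_cPoly_le (l : Fin n) : degreeOf l (cPoly R e) ≤ ∑ i ∈ univ.erase l, e i :=
  calc degreeOf l (cPoly R e)
      ≤ ∑ i, degreeOf l ((∑ j ∈ univ.erase i, (X j : MvPolynomial (Fin n) R)) ^ e i) :=
        degreeOf_prod_le _ _ _
    _ = degreeOf l ((∑ j ∈ univ.erase l, (X j : MvPolynomial (Fin n) R)) ^ e l) +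
          ∑ i ∈ univ.erase l,
            degreeOf l ((∑ j ∈ univ.erase i, (X j : MvPolynomial (Fin n) R)) ^ e i) :=
        (add_sum_erase _ _ (mem_univ l)).symm
    _ ≤ e l * 0 + ∑ i ∈ univ.erase l, e i * 1 := by
        gcongr with i
        · exact (degreeOf_pow_le _ _ _).trans
            (Nat.mul_le_mul_left _ (degreeOf_sum_X_of_notMem (notMem_erase l _)).le)
        · exact (degreeOf_pow_le _ _ _).trans
            (Nat.mul_le_mul_left _ (degreeOf_sum_X_le_one _ _))
    _ = ∑ i ∈ univ.erase l, e i := by simp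

lemma coeff_cPoly_eq_zero {μ : Fin n →₀ ℕ} {l : Fin n}
    (h : ∑ i ∈ univ.erase l, e i < μ l) :
    coeff μ (cPoly R e) = 0 :=
  notMem_support_iff.mp (notMem_support_of_degreeOf_lt l ((degreeOf_cPoly_le e l).trans_lt h))

lemma coeff_cPoly_ne_zero {k : ℕ} (hk : ∀ i, e i ≤ k) (hkE : 2 * k ≤ ∑ i, e i) :
    coeff (Finsupp.equivFunOnFinite.symm e) (cPoly ℕ e) ≠ 0 := by
  obtain ⟨τ, hτ⟩ := exists_perm_blockOf_ne e hk hkE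
  have hmonomial :
      Finsupp.equivFunOnFinite.symm e = ∑ p, Finsupp.single (blockOf e (τ p)) 1 := by
    rw [Equiv.sum_comp τ (fun p => Finsupp.single (blockOf e p) 1),
      sum_blockOf e (fun i => Finsupp.single i 1), Finsupp.equivFunOnFinite_symm_eq_sum]
    simp
  have hpoly : cPoly ℕ e = ∏ p, ∑ j ∈ univ.erase (blockOf e p), X j :=
    (prod_blockOf e _).symm
  rw [hmonomial, hpoly, ← Nat.one_le_iff_ne_zero]
  exact one_le_coeff_prod_sum_X _ _ fun p => mem_erase.mpr ⟨hτ p, mem_univ _⟩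

lemma coeff_cPoly_eq_zero_iff {l : Fin n} (hl : ∀ i, e i ≤ e l) :
    coeff (Finsupp.equivFunOnFinite.symm e) (cPoly ℕ e) = 0 ↔
      ∑ i ∈ univ.erase l, e i < e l := by
  refine ⟨fun h => ?_, coeff_cPoly_eq_zero (μ := Finsupp.equivFunOnFinite.symm e) e⟩
  by_contra! hle
  refine coeff_cPoly_ne_zero e hl ?_ h
  rw [← add_sum_erase _ _ (mem_univ l)]
  omega

end CPoly

/-- for `2 ≤ d₁ ≤ ⋯ ≤ dₙ`, `c(d) = 0` iff `dₙ - 1 > ∑_{i=1}^{n-1} (dᵢ - 1)`. -/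
theorem cCoeff_eq_zero_iff (n : ℕ) (hn : 2 ≤ n) (d : Fin n → ℕ)
    (hmono : Monotone d) :
    cCoeff d = 0 ↔
      ∑ i ∈ Finset.univ.erase (⟨n - 1, by omega⟩ : Fin n), (d i - 1) <
        d ⟨n - 1, by omega⟩ - 1 := by
  rw [cCoeff_eq_natCast_coeff_cPoly, Int.natCast_eq_zero]
  exact coeff_cPoly_eq_zero_iff _ fun i =>
    Nat.sub_le_sub_right (hmono (Fin.le_iff_val_le_val.mpr (Nat.le_sub_one_of_lt i.isLt))) 1
end

section
/- Fix n ≥ 1 and work in the ring ℤ[[x_1, …, x_n]] of multivariate formal power series. Let D = ∑_{i=0}^{n} (1 − i)·e_i(x_1, …, x_n), where e_i denotes the i-th elementary symmetric polynomial in x_1, …, x_n; D has constant coefficient 1 and is therefore invertible. Then for every tuple d = (d_1, …, d_n) of integers with each d_i ≥ 2, the coefficient of x_1^{d_1} ⋯ x_n^{d_n} in the power series x_1 ⋯ x_n · D^{−1} equals c(d). -/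
/-- The denominator `D = ∑_{i=0}^n (1 - i) eᵢ(x)` of the generating function, as a
multivariate formal power series over `ℤ`. -/
noncomputable def genDenom (n : ℕ) : MvPowerSeries (Fin n) ℤ :=
  ∑ i ∈ Finset.range (n + 1),
    ((1 : ℤ) - (i : ℤ)) •
      ((MvPolynomial.esymm (Fin n) ℤ i : MvPolynomial (Fin n) ℤ) : MvPowerSeries (Fin n) ℤ)

/-!
Write `σᵢ = ∑_{j ≠ i} h_j` and `G = ∑_e [h^e] (∏ᵢ σᵢ^{eᵢ}) x^e`, so that `[x^d] (x₁ ⋯ xₙ G) = c(d)`.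
Expanding the elementary symmetric polynomials, `D = ∑_S (1 - |S|) x^S`, and `D G = 1`:
for `e ≠ 0` with support `U`, the coefficient of `x^e` in `D G` is the coefficient of `h^e` in
`∑_{S ⊆ U} (1 - |S|) h^S ∏ᵢ σᵢ^{eᵢ - [i ∈ S]} = P · ∑_{S ⊆ U} (1 - |S|) ∏_{i ∈ S} hᵢ ∏_{i ∈ U \ S} σᵢ`
with `P = ∏_{i ∈ U} σᵢ^{eᵢ - 1}`. As `hᵢ + σᵢ = T := ∑_j h_j` for every `i`, the last sum is
`T^{|U|} - (∑_{j ∈ U} h_j) T^{|U| - 1} = T^{|U| - 1} ∑_{j ∉ U} h_j`, each term of which contains a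
variable that does not occur in `h^e`.
-/

open Finset

theorem Finset.sum_powerset_card_mul_prod_mul_prod {ι R : Type*} [DecidableEq ι] [CommSemiring R]
    (U : Finset ι) (a b : ι → R) :
    ∑ S ∈ U.powerset, (#S : R) * ((∏ i ∈ S, a i) * ∏ i ∈ U \ S, b i)
      = ∑ j ∈ U, a j * ∏ i ∈ U.erase j, (a i + b i) := by
  -- differentiate `∏ᵢ (aᵢ X + bᵢ) = ∑_S (∏_S a) (∏_{U \ S} b) X^{|S|}` and evaluate at `X = 1`
  open Polynomial in
  have h := congrArg (fun p => (derivative p).eval 1)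
    (prod_add (fun i => C (a i) * X) (fun i => C (b i)) U)
  simp only [derivative_prod_finset, derivative_sum, prod_mul_distrib, prod_const, ← map_prod,
    derivative_mul, derivative_add, derivative_C, derivative_X_pow, derivative_X, eval_finsetSum,
    eval_prod, eval_mul, eval_C, eval_add, eval_X, eval_pow, one_pow, mul_one, zero_mul, mul_zero,
    zero_add, add_zero] at h
  convert h.symm using 1 <;> exact sum_congr rfl fun _ _ => by ring

theorem Finset.sum_powerset_one_sub_card_mul_prod_mul_prod_of_add_eq {ι R : Type*}
    [DecidableEq ι] [CommRing R] (U : Finset ι) (a b : ι → R) (t : R)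
    (hab : ∀ i ∈ U, a i + b i = t) :
    ∑ S ∈ U.powerset, (1 - #S : R) * ((∏ i ∈ S, a i) * ∏ i ∈ U \ S, b i)
      = t ^ #U - (∑ j ∈ U, a j) * t ^ (#U - 1) := by
  have hprod : ∀ V ⊆ U, ∏ i ∈ V, (a i + b i) = t ^ #V := fun V hV => by
    rw [prod_congr rfl fun i hi => hab i (hV hi), prod_const]
  simp only [sub_mul, one_mul, sum_sub_distrib, ← prod_add, sum_powerset_card_mul_prod_mul_prod,
    hprod U subset_rfl, sum_mul]
  congr 1
  exact sum_congr rfl fun j hj => by rw [hprod _ (erase_subset j U), card_erase_of_mem hj]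

namespace Finsupp

variable {σ : Type*}

noncomputable def indicatorExp (S : Finset σ) : σ →₀ ℕ := ∑ i ∈ S, single i 1

theorem indicatorExp_apply [DecidableEq σ] (S : Finset σ) (j : σ) :
    indicatorExp S j = if j ∈ S then 1 else 0 := by
  simp [indicatorExp, finsetSum_apply, single_apply]

theorem indicatorExp_le_iff {S : Finset σ} {e : σ →₀ ℕ} :
    indicatorExp S ≤ e ↔ S ⊆ e.support := by
  classical
  simp only [le_def, indicatorExp_apply, Finset.subset_iff, mem_support_iff]
  refine forall_congr' fun i => ?_
  split_ifs <;> simp [Nat.one_le_iff_ne_zero, *]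

end Finsupp

open Finsupp (indicatorExp indicatorExp_apply indicatorExp_le_iff)

theorem MvPolynomial.monomial_indicatorExp {σ R : Type*} [CommSemiring R] (S : Finset σ) :
    monomial (indicatorExp S) (1 : R) = ∏ i ∈ S, X i :=
  monomial_sum_one S _

theorem MvPowerSeries.coeff_prod_X_mul {σ R : Type*} [Fintype σ] [CommSemiring R]
    {e : σ →₀ ℕ} (he : ∀ i, e i ≠ 0) (φ : MvPowerSeries σ R) :
    coeff e ((∏ i, X i) * φ) = coeff (e - indicatorExp univ) φ := by
  have hprod : ∏ i, (X i : MvPowerSeries σ R) = monomial (indicatorExp univ) 1 := by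
    rw [← MvPolynomial.coe_monomial, MvPolynomial.monomial_indicatorExp,
      ← MvPolynomial.coeToMvPowerSeries.ringHom_apply, map_prod]
    simp
  rw [hprod, coeff_monomial_mul, if_pos (indicatorExp_le_iff.mpr fun i _ => by simpa using he i),
    one_mul]

section CSeries

variable (σ R : Type*) [Fintype σ] [DecidableEq σ] [CommRing R]

open MvPolynomial

noncomputable def MvPolynomial.sumXErase (i : σ) : MvPolynomial σ R := ∑ j ∈ univ.erase i, X j

noncomputable def cSeries : MvPowerSeries σ R :=
  fun e => coeff e (∏ i, sumXErase σ R i ^ e i)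

variable {σ R}

theorem MvPolynomial.X_add_sumXErase (i : σ) : X i + sumXErase σ R i = ∑ j, X j :=
  add_sum_erase _ _ (mem_univ i)

theorem MvPolynomial.monomial_indicatorExp_mul_prod_sumXErase_pow {e : σ →₀ ℕ} {S : Finset σ}
    (hS : S ⊆ e.support) :
    monomial (indicatorExp S) (1 : R) * ∏ i, sumXErase σ R i ^ (e - indicatorExp S) i
      = (∏ i ∈ e.support, sumXErase σ R i ^ (e i - 1))
        * ((∏ i ∈ S, X i) * ∏ i ∈ e.support \ S, sumXErase σ R i) := by
  have hsupp : ∏ i, sumXErase σ R i ^ (e - indicatorExp S) i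
      = ∏ i ∈ e.support, sumXErase σ R i ^ (e - indicatorExp S) i := by
    refine (prod_subset (subset_univ _) fun i _ hi => ?_).symm
    rw [Finsupp.tsub_apply, Finsupp.notMem_support_iff.mp hi, zero_tsub, pow_zero]
  have hout : ∀ i ∈ e.support \ S, sumXErase σ R i ^ (e - indicatorExp S) i
      = sumXErase σ R i ^ (e i - 1) * sumXErase σ R i := fun i hi => by
    obtain ⟨hie, hiS⟩ := mem_sdiff.mp hi
    rw [← pow_succ, Finsupp.tsub_apply, indicatorExp_apply, if_neg hiS, Nat.sub_zero,
      Nat.sub_add_cancel (Nat.one_le_iff_ne_zero.mpr (Finsupp.mem_support_iff.mp hie))]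
  have hin : ∀ i ∈ S, sumXErase σ R i ^ (e - indicatorExp S) i = sumXErase σ R i ^ (e i - 1) :=
    fun i hi => by rw [Finsupp.tsub_apply, indicatorExp_apply, if_pos hi]
  rw [monomial_indicatorExp, hsupp, ← prod_sdiff hS, ← prod_sdiff hS (f := fun i => _ ^ (e i - 1)),
    prod_congr rfl hout, prod_congr rfl hin, prod_mul_distrib]
  ring

theorem coeff_cSeries (e : σ →₀ ℕ) :
    MvPowerSeries.coeff e (cSeries σ R) = coeff e (∏ i, sumXErase σ R i ^ e i) := rfl

theorem constantCoeff_cSeries : MvPowerSeries.constantCoeff (cSeries σ R) = 1 := by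
  simp [← MvPowerSeries.coeff_zero_eq_constantCoeff_apply, coeff_cSeries]

theorem sum_powerset_support_one_sub_card_mul_coeff_cSeries (e : σ →₀ ℕ) :
    ∑ S ∈ e.support.powerset,
        (1 - #S : R) * MvPowerSeries.coeff (e - indicatorExp S) (cSeries σ R)
      = if e = 0 then 1 else 0 := by
  split_ifs with he
  · simp [he, Finsupp.indicatorExp, constantCoeff_cSeries]
  set U := e.support
  have hU : U.Nonempty := Finsupp.support_nonempty_iff.mpr he
  set T : MvPolynomial σ R := ∑ j, X j
  have hsum : ∑ S ∈ U.powerset, C (1 - #S : R)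
        * (monomial (indicatorExp S) 1 * ∏ i, sumXErase σ R i ^ (e - indicatorExp S) i)
      = (∏ i ∈ U, sumXErase σ R i ^ (e i - 1)) * T ^ (#U - 1) * ∑ j ∈ univ \ U, X j := by
    simp only [map_sub, map_one, map_natCast]
    rw [sum_congr rfl fun S hS => by
        rw [monomial_indicatorExp_mul_prod_sumXErase_pow (mem_powerset.mp hS), mul_left_comm],
      ← mul_sum, sum_powerset_one_sub_card_mul_prod_mul_prod_of_add_eq U _ _ T
        fun i _ => X_add_sumXErase i]
    obtain ⟨k, hk⟩ : ∃ k, #U = k + 1 := Nat.exists_eq_add_one_of_ne_zero hU.card_pos.ne'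
    have hT : ∑ j ∈ univ \ U, X j + ∑ j ∈ U, X j = T := sum_sdiff (subset_univ U)
    rw [hk, Nat.add_sub_cancel, pow_succ, ← hT]
    ring
  calc _ = coeff e (∑ S ∈ U.powerset, C (1 - #S : R)
        * (monomial (indicatorExp S) 1 * ∏ i, sumXErase σ R i ^ (e - indicatorExp S) i)) := by
        rw [coeff_sum]
        refine sum_congr rfl fun S hS => ?_
        rw [coeff_C_mul, coeff_monomial_mul',
          if_pos (indicatorExp_le_iff.mpr (mem_powerset.mp hS)), one_mul, coeff_cSeries]
    _ = 0 := by
        rw [hsum, mul_sum, coeff_sum]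
        refine sum_eq_zero fun j hj => ?_
        rw [coeff_mul_X', if_neg (mem_sdiff.mp hj).2]

theorem sum_powerset_monomial_mul_cSeries :
    (∑ S ∈ (univ : Finset σ).powerset, MvPowerSeries.monomial (indicatorExp S) (1 - #S : R))
      * cSeries σ R = 1 := by
  ext e
  have hfilter : {S ∈ (univ : Finset σ).powerset | indicatorExp S ≤ e} = e.support.powerset := by
    ext S
    simp [indicatorExp_le_iff]
  rw [MvPowerSeries.coeff_one, sum_mul, map_sum]
  simp_rw [MvPowerSeries.coeff_monomial_mul]
  rw [← sum_filter, hfilter, sum_powerset_support_one_sub_card_mul_coeff_cSeries]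

end CSeries

theorem genDenom_eq_sum_powerset_monomial (n : ℕ) :
    genDenom n = ∑ S ∈ (univ : Finset (Fin n)).powerset,
      MvPowerSeries.monomial (indicatorExp S) (1 - #S : ℤ) := by
  rw [genDenom, sum_powerset, card_univ, Fintype.card_fin]
  refine sum_congr rfl fun k _ => ?_
  rw [MvPolynomial.esymm_eq_sum_monomial, ← MvPolynomial.coeToMvPowerSeries.ringHom_apply,
    map_sum, smul_sum]
  refine sum_congr rfl fun S hS => ?_
  rw [MvPolynomial.coeToMvPowerSeries.ringHom_apply, MvPolynomial.coe_monomial, ← map_smul,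
    smul_eq_mul, mul_one, (mem_powersetCard.mp hS).2]
  rfl

theorem genDenom_mul_cSeries (n : ℕ) : genDenom n * cSeries (Fin n) ℤ = 1 := by
  rw [genDenom_eq_sum_powerset_monomial]
  exact sum_powerset_monomial_mul_cSeries

theorem generating_function_cCoeff_general (n : ℕ) :
    MvPowerSeries.constantCoeff (genDenom n) = 1 ∧
    (∃ g : MvPowerSeries (Fin n) ℤ, genDenom n * g = 1) ∧
    ∀ (d : Fin n → ℕ), (∀ i, 2 ≤ d i) →
      ∀ g : MvPowerSeries (Fin n) ℤ, genDenom n * g = 1 →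
        MvPowerSeries.coeff (Finsupp.equivFunOnFinite.symm d)
          ((∏ i : Fin n, MvPowerSeries.X i) * g) = cCoeff d := by
  have hDG := genDenom_mul_cSeries n
  refine ⟨?_, ⟨_, hDG⟩, fun d hd g hg => ?_⟩
  · simpa [constantCoeff_cSeries] using congrArg MvPowerSeries.constantCoeff hDG
  obtain rfl : cSeries (Fin n) ℤ = g := left_inv_eq_right_inv (by rw [mul_comm, hDG]) hg
  have hshift : Finsupp.equivFunOnFinite.symm d - indicatorExp univ
      = Finsupp.equivFunOnFinite.symm fun i => d i - 1 := by
    ext i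
    simp [indicatorExp_apply]
  rw [MvPowerSeries.coeff_prod_X_mul fun i => by simpa using (by have := hd i; omega), hshift]
  rfl

/-- `D` has constant coefficient `1`, hence is invertible, and the coefficient
of `x₁^{d₁} ⋯ xₙ^{dₙ}` in `x₁ ⋯ xₙ · D⁻¹` equals `c(d)` for every `d` with all `dᵢ ≥ 2`. -/
theorem generating_function_cCoeff (n : ℕ) (hn : 1 ≤ n) :
    MvPowerSeries.constantCoeff (genDenom n) = 1 ∧
    (∃ g : MvPowerSeries (Fin n) ℤ, genDenom n * g = 1) ∧
    ∀ (d : Fin n → ℕ), (∀ i, 2 ≤ d i) →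
      ∀ g : MvPowerSeries (Fin n) ℤ, genDenom n * g = 1 →
        MvPowerSeries.coeff (Finsupp.equivFunOnFinite.symm d)
          ((∏ i : Fin n, MvPowerSeries.X i) * g) = cCoeff d :=
  generating_function_cCoeff_general n
end

section
/- For every integer n ≥ 2, the number c(2, 2, …, 2) (with n entries equal to 2) equals the number of derangements of an n-element set, i.e., the number of permutations of {1, …, n} with no fixed point. -/
/-!
Expanding `∏ i (∑_{j ≠ i} h_j)` gives one monomial `∏ i h_{g i}` for every map `g` with
`g i ≠ i` for all `i`. That monomial is `h₁ ⋯ hₙ` exactly when every fibre of `g` is a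
singleton, i.e. when `g` is a bijection, hence a derangement.
-/

open MvPolynomial Finset

theorem MvPolynomial.prod_X_comp_eq_monomial {ι σ R : Type*} [CommSemiring R] [Fintype ι]
    (g : ι → σ) :
    ∏ i, (X (g i) : MvPolynomial σ R) = monomial (∑ i, Finsupp.single (g i) 1) 1 := by
  rw [monomial_sum_one]
  rfl

theorem MvPolynomial.coeff_prod_sum_X {ι σ R : Type*} [CommSemiring R] [Fintype ι]
    [DecidableEq ι] [DecidableEq σ] (s : ι → Finset σ) (m : σ →₀ ℕ) :
    coeff m (∏ i, ∑ j ∈ s i, (X j : MvPolynomial σ R)) =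
      #{g ∈ Fintype.piFinset s | ∑ i, Finsupp.single (g i) 1 = m} := by
  simp only [prod_univ_sum, coeff_sum, prod_X_comp_eq_monomial, coeff_monomial, sum_boole]

theorem Finsupp.sum_single_one_eq_one_iff_bijective {α β : Type*} [Fintype α] [Finite β]
    [DecidableEq β] (g : α → β) :
    ∑ i, Finsupp.single (g i) 1 = Finsupp.equivFunOnFinite.symm (fun _ => 1) ↔
      Function.Bijective g := by
  have fibre_card : ∀ j, (∑ i, Finsupp.single (g i) 1 : β →₀ ℕ) j = #{i | g i = j} := by
    intro j
    simp [Finsupp.finsetSum_apply, Finsupp.single_apply]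
  rw [Function.bijective_iff_existsUnique, Finsupp.ext_iff]
  simp only [fibre_card, Finsupp.coe_equivFunOnFinite_symm, Fintype.existsUnique_iff_card_one]

theorem Equiv.Perm.card_filter_bijective_piFinset {α : Type*} [Fintype α] [DecidableEq α]
    (s : α → Finset α) :
    #{g ∈ Fintype.piFinset s | Function.Bijective g} =
      Fintype.card {σ : Equiv.Perm α // ∀ i, σ i ∈ s i} := by
  rw [← Fintype.card_coe]
  exact Fintype.card_congr
    { toFun := fun g => ⟨Equiv.ofBijective g.1 (mem_filter.mp g.2).2,
        Fintype.mem_piFinset.mp (mem_filter.mp g.2).1⟩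
      invFun := fun σ =>
        ⟨σ.1, mem_filter.mpr ⟨Fintype.mem_piFinset.mpr σ.2, σ.1.bijective⟩⟩
      left_inv := fun _ => rfl
      right_inv := fun _ => Subtype.ext (Equiv.ext fun _ => rfl) }

theorem cCoeff_two_eq_derangements_general (n : ℕ) :
    cCoeff (fun _ : Fin n => 2) =
      Fintype.card {f : Equiv.Perm (Fin n) // ∀ x, f x ≠ x} := by
  classical
  have pow_two_sub_one : ∀ p : MvPolynomial (Fin n) ℤ, p ^ (2 - 1) = p := pow_one
  simp only [cCoeff, pow_two_sub_one, coeff_prod_sum_X,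
    Finsupp.sum_single_one_eq_one_iff_bijective, Equiv.Perm.card_filter_bijective_piFinset,
    mem_erase, ne_eq, mem_univ, and_true]

/-- `c(2, …, 2)` (with `n` entries) is the number of derangements of an
`n`-element set, i.e. the number of fixed-point-free permutations of `{1, …, n}`. -/
theorem cCoeff_two_eq_derangements (n : ℕ) (hn : 2 ≤ n) :
    cCoeff (fun _ : Fin n => 2) =
      Fintype.card {f : Equiv.Perm (Fin n) // ∀ x, f x ≠ x} :=
  cCoeff_two_eq_derangements_general n
end

section
/- For every tuple d = (d_1, …, d_n) of positive integers, c(d) equals the number of block derangements of F. -/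
/-!
Expand `∏ᵢ (∑_{j ≠ i} h_j)^(dᵢ-1)` as a product of one factor `∑_{j ≠ x.1} h_j` per element
`x` of `F`. A term of the expansion is a choice of a block `g x ≠ x.1` for every `x ∈ F`, and it
is the monomial `∏ₖ hₖ^(dₖ-1)` exactly when every fibre `g⁻¹(k)` has `dₖ - 1` elements. The
fibres of such a `g` form a block derangement, and every block derangement arises from exactly
one `g`.
-/

open Finset MvPolynomial Function

namespace MvPolynomial

variable {R σ ι : Type*} [CommSemiring R]

theorem prod_X_comp_eq_monomial_s4 (s : Finset ι) (g : ι → σ) :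
    ∏ x ∈ s, (X (g x) : MvPolynomial σ R) = monomial (∑ x ∈ s, Finsupp.single (g x) 1) 1 :=
  (monomial_sum_one s _).symm

theorem coeff_prod_sum_X_s4 [Fintype ι] [DecidableEq ι] [DecidableEq σ] (s : ι → Finset σ)
    (m : σ →₀ ℕ) :
    coeff m (∏ x, ∑ j ∈ s x, (X j : MvPolynomial σ R)) =
      #{g ∈ Fintype.piFinset s | ∑ x, Finsupp.single (g x) 1 = m} := by
  simp only [prod_univ_sum, coeff_sum, prod_X_comp_eq_monomial_s4, coeff_monomial, sum_boole]

end MvPolynomial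

theorem Finsupp.sum_single_one_apply {ι σ : Type*} [DecidableEq σ] (s : Finset ι) (g : ι → σ)
    (k : σ) : (∑ x ∈ s, Finsupp.single (g x) 1) k = #{x ∈ s | g x = k} := by
  rw [Finsupp.finsetSum_apply, card_filter]
  simp only [Finsupp.single_apply]

section FiberFamily

variable {α β : Type*} [Fintype α] [DecidableEq β]

noncomputable def fiberFamilyEquiv :
    (α → β) ≃ {A : β → Finset α // Pairwise (Disjoint on A) ∧ ∀ x, ∃ k, x ∈ A k} where
  toFun g := ⟨fun k => {x | g x = k}, fun k l hkl => disjoint_filter.2 fun _ _ hk hl =>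
    hkl (hk.symm.trans hl), fun x => ⟨g x, by simp⟩⟩
  invFun A x := (A.2.2 x).choose
  left_inv g := funext fun x => by
    have hx := (⟨g x, by simp⟩ : ∃ k, x ∈ ({y | g y = k} : Finset α)).choose_spec
    exact (mem_filter.1 hx).2.symm
  right_inv := by
    rintro ⟨A, hdisj, hcov⟩
    ext k x
    simp only [mem_filter, mem_univ, true_and]
    refine ⟨fun h => h ▸ (hcov x).choose_spec, fun hx => ?_⟩
    by_contra hne
    exact disjoint_left.1 (hdisj hne) (hcov x).choose_spec hx

@[simp]
theorem fiberFamilyEquiv_apply_coe (g : α → β) (k : β) :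
    (fiberFamilyEquiv g).1 k = ({x | g x = k} : Finset α) :=
  rfl

end FiberFamily

theorem cCoeff_eq_card_filter {n : ℕ} (d : Fin n → ℕ) :
    cCoeff d = #{g : (Σ i : Fin n, Fin (d i - 1)) → Fin n |
      (∀ k, #{x | g x = k} = d k - 1) ∧ ∀ x, g x ≠ x.1} := by
  have hprod : ∏ i : Fin n, (∑ j ∈ univ.erase i, (X j : MvPolynomial (Fin n) ℤ)) ^ (d i - 1) =
      ∏ x : Σ i : Fin n, Fin (d i - 1), ∑ j ∈ univ.erase x.1, X j := by
    simp only [Fintype.prod_sigma, prod_const, card_univ, Fintype.card_fin]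
  rw [cCoeff, hprod, coeff_prod_sum_X_s4]
  congr 2
  ext g
  simp only [mem_filter, Fintype.mem_piFinset, mem_erase, mem_univ, and_true, true_and,
    Finsupp.ext_iff, Finsupp.sum_single_one_apply]
  exact and_comm

/-- `Fᵢ = {(i, j) : 1 ≤ j ≤ dᵢ - 1}` is modelled as the fibre over `i` of the sigma type
`Σ i, Fin (dᵢ - 1)`. -/
theorem cCoeff_eq_card_blockDerangements_general (n : ℕ) (d : Fin n → ℕ) :
    cCoeff d =
      (Nat.card {A : Fin n → Finset (Σ i : Fin n, Fin (d i - 1)) //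
        (∀ k l, k ≠ l → Disjoint (A k) (A l)) ∧
        (∀ x : Σ i : Fin n, Fin (d i - 1), ∃ k, x ∈ A k) ∧
        (∀ k, (A k).card = d k - 1) ∧
        (∀ k, ∀ x ∈ A k, Sigma.fst x ≠ k)} : ℤ) := by
  rw [cCoeff_eq_card_filter, ← Fintype.card_subtype, ← Nat.card_eq_fintype_card]
  have hcond (g : (Σ i : Fin n, Fin (d i - 1)) → Fin n) :
      ((∀ k, #{x | g x = k} = d k - 1) ∧ ∀ x, g x ≠ x.1) ↔
        (∀ k, #((fiberFamilyEquiv g).1 k) = d k - 1) ∧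
          ∀ k, ∀ x ∈ (fiberFamilyEquiv g).1 k, x.1 ≠ k := by
    simp [forall_comm (α := Fin n), ne_comm]
  exact congrArg _ <| Nat.card_congr <| (fiberFamilyEquiv.subtypeEquiv hcond).trans <|
    (Equiv.subtypeSubtypeEquivSubtypeInter _ _).trans <| Equiv.subtypeEquivRight fun _ => and_assoc

/-- `c(d)` equals the number of block derangements of
`F = ⋃ᵢ Fᵢ`, where `Fᵢ = {(i, j) : 1 ≤ j ≤ dᵢ - 1}` (here modelled as the sigma type
`Σ i, Fin (dᵢ - 1)`): ordered tuples `(A₁, …, Aₙ)` of pairwise disjoint subsets of `F`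
covering `F` with `|Aₖ| = dₖ - 1` and `Fₖ ∩ Aₖ = ∅` for every `k`. -/
theorem cCoeff_eq_card_blockDerangements (n : ℕ) (d : Fin n → ℕ) (hd : ∀ i, 0 < d i) :
    cCoeff d =
      (Nat.card {A : Fin n → Finset (Σ i : Fin n, Fin (d i - 1)) //
        (∀ k l, k ≠ l → Disjoint (A k) (A l)) ∧
        (∀ x : Σ i : Fin n, Fin (d i - 1), ∃ k, x ∈ A k) ∧
        (∀ k, (A k).card = d k - 1) ∧
        (∀ k, ∀ x ∈ A k, Sigma.fst x ≠ k)} : ℤ) :=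
  cCoeff_eq_card_blockDerangements_general n d
end

section
/- Let d ≥ 2 and let X = (X^{(1)}, X^{(2)}) be a two-player game of format (d, d) over ℂ, with payoff matrices X^{(1)} = (x^{(1)}_{jk}) and X^{(2)} = (x^{(2)}_{jk}) in ℂ^{d×d}. Let A be the (d−1)×d matrix with entries A_{k,j} = x^{(1)}_{1,j} − x^{(1)}_{k+1,j} (1 ≤ k ≤ d−1, 1 ≤ j ≤ d) and let B be the (d−1)×d matrix with entries B_{k,i} = x^{(2)}_{i,1} − x^{(2)}_{i,k+1}. Then the Nash equilibrium set of X is infinite if and only if rank A ≤ d − 2 or rank B ≤ d − 2; moreover, if rank A = rank B = d − 1 then the Nash equilibrium set consists of exactly one point. -/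
/-!
The equilibrium conditions decouple: all entries of `X⁽¹⁾π⁽²⁾` are equal iff `Aπ⁽²⁾ = 0`, and all
entries of `X⁽²⁾ᵀπ⁽¹⁾` are equal iff `Bπ⁽¹⁾ = 0`. Hence the Nash set is the product
`ℙ(ker B) × ℙ(ker A)`. By rank–nullity `dim ker A = d - rank A ≥ 1`, since `A` has `d - 1` rows,
and over the infinite field `ℂ` the projectivization of a subspace is a single point in
dimension one and infinite in dimension at least two.
-/

open Matrix Module
open scoped LinearAlgebra.Projectivization

namespace Projectivization

variable {K V : Type*} [Field K] [AddCommGroup V] [Module K V]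

theorem infinite_of_one_lt_finrank [Infinite K] (h : 1 < finrank K V) : Infinite (ℙ K V) := by
  have : Nontrivial V := Module.nontrivial_of_finrank_pos (R := K) (by omega)
  obtain ⟨x, hx⟩ := exists_ne (0 : V)
  obtain ⟨y, hxy⟩ := exists_linearIndependent_pair_of_one_lt_finrank h hx
  have hpair := LinearIndependent.pair_iff.mp hxy
  have hne (c : K) : x + c • y ≠ 0 := fun h0 => one_ne_zero (hpair 1 c (by simpa using h0)).1
  refine Infinite.of_injective (fun c => mk K (x + c • y) (hne c)) fun c c' hcc' => ?_
  obtain ⟨a, ha⟩ := (mk_eq_mk_iff' K _ _ (hne c) (hne c')).mp hcc'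
  have hlin : (a - 1) • x + (a * c' - c) • y = 0 := by
    rw [← sub_eq_zero.mpr ha]; module
  obtain ⟨ha1, hac⟩ := hpair _ _ hlin
  rw [sub_eq_zero.mp ha1, one_mul, sub_eq_zero] at hac
  exact hac.symm

end Projectivization

namespace Submodule

open Projectivization

variable {K V : Type*} [Field K] [AddCommGroup V] [Module K V]

theorem mem_projectivization_iff_exists (W : Submodule K V) (x : ℙ K V) :
    x ∈ W.projectivization ↔ ∃ v, ∃ hv : v ≠ 0, x = Projectivization.mk K v hv ∧ v ∈ W := by
  constructor
  · induction x using Projectivization.ind with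
    | h v hv => exact fun hx => ⟨v, hv, rfl, hx⟩
  · rintro ⟨v, hv, rfl, hvW⟩
    exact hvW

theorem nonempty_projectivization_of_finrank_pos (W : Submodule K V) (h : 0 < finrank K W) :
    (W.projectivization : Set (ℙ K V)).Nonempty := by
  have : Nontrivial W := Module.nontrivial_of_finrank_pos h
  obtain ⟨w, hw⟩ := exists_ne (0 : W)
  exact ⟨Projectivization.mk K (w : V) (by simpa using hw), w.2⟩

theorem subsingleton_projectivization_of_finrank_le_one (W : Submodule K V)
    [FiniteDimensional K W] (h : finrank K W ≤ 1) :
    (W.projectivization : Set (ℙ K V)).Subsingleton := by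
  have hline (x : ℙ K V) (hx : x ∈ W.projectivization) : x.submodule = W :=
    eq_of_le_of_finrank_le ((mem_projectivization_iff_submodule_le W x).mp hx)
      (h.trans x.finrank_submodule.ge)
  exact fun x hx y hy => submodule_injective ((hline x hx).trans (hline y hy).symm)

theorem infinite_projectivization_of_one_lt_finrank [Infinite K] (W : Submodule K V)
    (h : 1 < finrank K W) : (W.projectivization : Set (ℙ K V)).Infinite := by
  have := Projectivization.infinite_of_one_lt_finrank h
  refine (Set.infinite_range_of_injective (map_injective W.subtype W.injective_subtype)).mono ?_
  rintro _ ⟨x, rfl⟩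
  induction x using Projectivization.ind with
  | h w hw => exact w.2

theorem infinite_projectivization_iff [Infinite K] (W : Submodule K V) [FiniteDimensional K W] :
    (W.projectivization : Set (ℙ K V)).Infinite ↔ 2 ≤ finrank K W := by
  refine ⟨fun hinf => ?_, W.infinite_projectivization_of_one_lt_finrank⟩
  by_contra! hle
  exact hinf (W.subsingleton_projectivization_of_finrank_le_one (by omega)).finite

end Submodule

section FirstRowSub

variable {R ι : Type*} {d : ℕ}

def Matrix.firstRowSub [Sub R] (M : Matrix (Fin d) ι R) (hd : 0 < d) :
    Matrix (Fin (d - 1)) ι R :=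
  fun k j => M ⟨0, hd⟩ j - M ⟨k.1 + 1, by omega⟩ j

theorem forall_eq_iff_forall_sub_succ_eq_zero [AddGroup R] (hd : 0 < d) (w : Fin d → R) :
    (∀ s t, w s = w t) ↔ ∀ k : Fin (d - 1), w ⟨0, hd⟩ - w ⟨k.1 + 1, by omega⟩ = 0 := by
  refine ⟨fun h k => sub_eq_zero.mpr (h _ _), fun h => ?_⟩
  suffices hw0 : ∀ s, w s = w ⟨0, hd⟩ from fun s t => (hw0 s).trans (hw0 t).symm
  rintro ⟨_ | k, hk⟩
  · rfl
  · exact (sub_eq_zero.mp (h ⟨k, by omega⟩)).symm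

theorem Matrix.firstRowSub_mulVec [Fintype ι] [Ring R] (M : Matrix (Fin d) ι R) (hd : 0 < d)
    (v : ι → R) (k : Fin (d - 1)) :
    (M.firstRowSub hd *ᵥ v) k = (M *ᵥ v) ⟨0, hd⟩ - (M *ᵥ v) ⟨k.1 + 1, by omega⟩ := by
  simp only [mulVec, dotProduct, firstRowSub, sub_mul, Finset.sum_sub_distrib]

theorem Matrix.mulVec_const_iff_mem_ker_firstRowSub [Fintype ι] [CommRing R]
    (M : Matrix (Fin d) ι R) (hd : 0 < d) (v : ι → R) :
    (∀ s t, (M *ᵥ v) s = (M *ᵥ v) t) ↔ v ∈ LinearMap.ker (M.firstRowSub hd).mulVecLin := by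
  rw [forall_eq_iff_forall_sub_succ_eq_zero hd, LinearMap.mem_ker, mulVecLin_apply, funext_iff]
  simp only [firstRowSub_mulVec, Pi.zero_apply]

end FirstRowSub

theorem Matrix.finrank_ker_mulVecLin {K m n : Type*} [Field K] [Fintype m] [Fintype n]
    (A : Matrix m n K) : finrank K (LinearMap.ker A.mulVecLin) = Fintype.card n - A.rank := by
  have := LinearMap.finrank_range_add_finrank_ker A.mulVecLin
  rw [finrank_fintype_fun_eq_card] at this
  exact Nat.eq_sub_of_add_eq' this

theorem nashSet_eq_prod_projectivization_ker {K : Type*} [Field K] {m n : ℕ} (hm : 0 < m)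
    (hn : 0 < n) (X1 X2 : Matrix (Fin m) (Fin n) K) :
    {p : ℙ K (Fin m → K) × ℙ K (Fin n → K) | ∃ (π1 : Fin m → K) (π2 : Fin n → K)
        (h1 : π1 ≠ 0) (h2 : π2 ≠ 0),
        p.1 = Projectivization.mk K π1 h1 ∧ p.2 = Projectivization.mk K π2 h2 ∧
        (∀ s t, X1.mulVec π2 s = X1.mulVec π2 t) ∧
        (∀ s t, X2.transpose.mulVec π1 s = X2.transpose.mulVec π1 t)} =
      ((LinearMap.ker (X2ᵀ.firstRowSub hn).mulVecLin).projectivization : Set _) ×ˢ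
        ((LinearMap.ker (X1.firstRowSub hm).mulVecLin).projectivization : Set _) := by
  ext ⟨p, q⟩
  simp only [Set.mem_ofPred_eq, Set.mem_prod, SetLike.mem_coe,
    X1.mulVec_const_iff_mem_ker_firstRowSub hm, X2ᵀ.mulVec_const_iff_mem_ker_firstRowSub hn,
    Submodule.mem_projectivization_iff_exists]
  exact ⟨fun ⟨π1, π2, h1, h2, hp, hq, hπ2, hπ1⟩ => ⟨⟨π1, h1, hp, hπ1⟩, π2, h2, hq, hπ2⟩,
    fun ⟨⟨π1, h1, hp, hπ1⟩, π2, h2, hq, hπ2⟩ => ⟨π1, π2, h1, h2, hp, hq, hπ2, hπ1⟩⟩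

section KernelPairs

variable {K m n m' n' : Type*} [Field K] [Fintype m] [Fintype n] [Fintype m'] [Fintype n']
  (A : Matrix m n K) (B : Matrix m' n' K)

theorem Matrix.infinite_prod_projectivization_ker_iff [Infinite K]
    (hA : A.rank < Fintype.card n) (hB : B.rank < Fintype.card n') :
    (((LinearMap.ker B.mulVecLin).projectivization : Set (ℙ K (n' → K))) ×ˢ
        ((LinearMap.ker A.mulVecLin).projectivization : Set (ℙ K (n → K)))).Infinite ↔
      A.rank + 2 ≤ Fintype.card n ∨ B.rank + 2 ≤ Fintype.card n' := by
  rw [Set.infinite_prod, Submodule.infinite_projectivization_iff,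
    Submodule.infinite_projectivization_iff, A.finrank_ker_mulVecLin, B.finrank_ker_mulVecLin]
  have hneA := (LinearMap.ker A.mulVecLin).nonempty_projectivization_of_finrank_pos
    (by rw [A.finrank_ker_mulVecLin]; omega)
  have hneB := (LinearMap.ker B.mulVecLin).nonempty_projectivization_of_finrank_pos
    (by rw [B.finrank_ker_mulVecLin]; omega)
  simp only [hneA, hneB, and_true]
  omega

theorem Matrix.existsUnique_mem_prod_projectivization_ker
    (hA : A.rank + 1 = Fintype.card n) (hB : B.rank + 1 = Fintype.card n') :
    ∃! p, p ∈ ((LinearMap.ker B.mulVecLin).projectivization : Set (ℙ K (n' → K))) ×ˢ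
      ((LinearMap.ker A.mulVecLin).projectivization : Set (ℙ K (n → K))) := by
  have hfA := A.finrank_ker_mulVecLin
  have hfB := B.finrank_ker_mulVecLin
  obtain ⟨p, hp⟩ :=
    ((LinearMap.ker B.mulVecLin).nonempty_projectivization_of_finrank_pos (by omega)).prod
      ((LinearMap.ker A.mulVecLin).nonempty_projectivization_of_finrank_pos (by omega))
  have hsub :=
    ((LinearMap.ker B.mulVecLin).subsingleton_projectivization_of_finrank_le_one (by omega)).prod
      ((LinearMap.ker A.mulVecLin).subsingleton_projectivization_of_finrank_le_one (by omega))
  exact ⟨p, hp, fun q hq => hsub hq hp⟩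

end KernelPairs

/-- for a two-player game `(X₁, X₂)` of format `(d, d)` over `ℂ`, with
difference matrices `A` (rows of `X₁`) and `B` (columns of `X₂`), the Nash equilibrium
set (inside `ℙ^{d-1} × ℙ^{d-1}`) is infinite iff `rank A ≤ d - 2` or `rank B ≤ d - 2`;
and if `rank A = rank B = d - 1` it consists of exactly one point. -/
theorem two_player_square_nash (d : ℕ) (hd : 2 ≤ d)
    (X1 X2 : Matrix (Fin d) (Fin d) ℂ) :
    let A : Matrix (Fin (d - 1)) (Fin d) ℂ :=
      fun k j => X1 ⟨0, by omega⟩ j - X1 ⟨k.1 + 1, by have := k.2; omega⟩ j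
    let B : Matrix (Fin (d - 1)) (Fin d) ℂ :=
      fun k i => X2 i ⟨0, by omega⟩ - X2 i ⟨k.1 + 1, by have := k.2; omega⟩
    let NashSet : Set (Projectivization ℂ (Fin d → ℂ) × Projectivization ℂ (Fin d → ℂ)) :=
      {p | ∃ (π1 π2 : Fin d → ℂ) (h1 : π1 ≠ 0) (h2 : π2 ≠ 0),
        p.1 = Projectivization.mk ℂ π1 h1 ∧ p.2 = Projectivization.mk ℂ π2 h2 ∧
        (∀ s t, X1.mulVec π2 s = X1.mulVec π2 t) ∧
        (∀ s t, X2.transpose.mulVec π1 s = X2.transpose.mulVec π1 t)}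
    (NashSet.Infinite ↔ A.rank ≤ d - 2 ∨ B.rank ≤ d - 2) ∧
    (A.rank = d - 1 → B.rank = d - 1 → ∃! p, p ∈ NashSet) := by
  intro A B NashSet
  have hd0 : 0 < d := by omega
  -- `A` and `B` unfold to `X1.firstRowSub hd0` and `X2ᵀ.firstRowSub hd0`.
  rw [show NashSet = _ from nashSet_eq_prod_projectivization_ker hd0 hd0 X1 X2]
  have hrA : A.rank ≤ d - 1 := A.rank_le_height
  have hrB : B.rank ≤ d - 1 := B.rank_le_height
  have hcard : Fintype.card (Fin d) = d := Fintype.card_fin d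
  exact ⟨(Matrix.infinite_prod_projectivization_ker_iff A B (by omega) (by omega)).trans
      (by omega),
    fun hA1 hB1 => Matrix.existsUnique_mem_prod_projectivization_ker A B (by omega) (by omega)⟩
end

section
/- Let 2 ≤ d_1 < d_2 and let X = (X^{(1)}, X^{(2)}) be a two-player game of format (d_1, d_2) over ℂ, with X^{(2)} = (x^{(2)}_{ik}) ∈ ℂ^{d_1×d_2}. The following are equivalent: (a) the Nash equilibrium set of X is nonempty; (b) the (d_1+1)×d_2 matrix obtained from X^{(2)} by appending a row with all entries equal to 1 has rank at most d_1; (c) the (d_2−1)×d_1 matrix B with entries B_{k,i} = x^{(2)}_{i,1} − x^{(2)}_{i,k+1} (1 ≤ k ≤ d_2−1, 1 ≤ i ≤ d_1) has rank at most d_1 − 1. -/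
/-!
A nonzero `π₂` with `X₁ π₂ = 0` always exists because `X₁` has more columns than rows, so the
Nash condition reduces to player 1's: some `π₁ ≠ 0` makes all entries of `π₁ᵀ X₂` equal, say
to `c`. Such `π₁` exist exactly when `(π₁, -c)` is a nontrivial left kernel vector of `X₂` with
a row of ones appended, i.e. when that matrix has rank at most `d₁`; and exactly when `π₁` is a
nontrivial kernel vector of the matrix `B` of column differences, i.e. when `B` has rank at
most `d₁ - 1`.
-/

open Matrix

theorem Fin.forall_apply_eq_iff_forall_apply_zero_eq {α : Type*} {d : ℕ} (hd : 0 < d)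
    (u : Fin d → α) :
    (∀ s t, u s = u t) ↔ ∀ k : Fin (d - 1), u ⟨0, hd⟩ = u ⟨k + 1, by omega⟩ := by
  refine ⟨fun h k => h _ _, fun h => ?_⟩
  suffices hzero : ∀ s, u s = u ⟨0, hd⟩ from fun s t => by rw [hzero s, hzero t]
  rintro ⟨_ | k, hk⟩
  · rfl
  · exact (h ⟨k, by omega⟩).symm

namespace Matrix

theorem snoc_vecMul_of_snoc {R n : Type*} [Semiring R] {k : ℕ} (A : Fin k → n → R) (r : n → R)
    (π : Fin k → R) (c : R) : Fin.snoc π c ᵥ* of (Fin.snoc A r) = π ᵥ* of A + c • r := by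
  ext j
  simp [vecMul, dotProduct, Fin.sum_univ_castSucc]

variable {K m n : Type*} [Field K]

theorem rank_lt_card_width_iff [Fintype n] (A : Matrix m n K) :
    A.rank < Fintype.card n ↔ ∃ v, v ≠ 0 ∧ A *ᵥ v = 0 := by
  have h := A.mulVecLin.finrank_range_add_finrank_ker
  rw [Module.finrank_fintype_fun_eq_card] at h
  have hker : 0 < Module.finrank K (LinearMap.ker A.mulVecLin) ↔ ∃ v, v ≠ 0 ∧ A *ᵥ v = 0 := by
    show 1 ≤ _ ↔ _
    rw [Submodule.one_le_finrank_iff, Submodule.ne_bot_iff]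
    simp only [LinearMap.mem_ker, mulVecLin_apply, and_comm]
  rw [rank, ← hker]
  omega

theorem rank_lt_card_height_iff [Fintype m] [Fintype n] (A : Matrix m n K) :
    A.rank < Fintype.card m ↔ ∃ v, v ≠ 0 ∧ v ᵥ* A = 0 := by
  simp_rw [← rank_transpose A, rank_lt_card_width_iff, mulVec_transpose]

theorem rank_of_snoc_one_lt_iff [Fintype n] [Nonempty n] {k : ℕ} (A : Fin k → n → K) :
    (of (Fin.snoc A 1)).rank < k + 1 ↔
      ∃ π, π ≠ 0 ∧ ∀ s t, (π ᵥ* of A) s = (π ᵥ* of A) t := by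
  have h := rank_lt_card_height_iff (of (Fin.snoc A 1))
  rw [Fintype.card_fin] at h
  rw [h]
  constructor
  · rintro ⟨w, hw0, hw⟩
    rw [← Fin.snoc_init_self w, snoc_vecMul_of_snoc] at hw
    have hconst : ∀ s, (Fin.init w ᵥ* of A) s = -w (Fin.last k) := fun s => by
      simpa [add_eq_zero_iff_eq_neg] using congrFun hw s
    refine ⟨Fin.init w, fun hinit => hw0 ?_, fun s t => by rw [hconst, hconst]⟩
    have hlast : w (Fin.last k) = 0 := by
      simpa [hinit] using hconst (Classical.arbitrary n)
    ext i
    refine Fin.lastCases hlast (fun i => ?_) i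
    exact congrFun hinit i
  · rintro ⟨π, hπ0, hconst⟩
    refine ⟨Fin.snoc π (-(π ᵥ* of A) (Classical.arbitrary n)), fun h => hπ0 ?_, ?_⟩
    · ext i
      simpa using congrFun h i.castSucc
    · ext j
      simp [snoc_vecMul_of_snoc, hconst j (Classical.arbitrary n)]

theorem rank_of_col_zero_sub_lt_card_iff [Fintype m] {d : ℕ} (hd : 0 < d) (A : Matrix m (Fin d) K) :
    (of fun (k : Fin (d - 1)) i => A i ⟨0, hd⟩ - A i ⟨k + 1, by omega⟩).rank < Fintype.card m ↔
      ∃ π, π ≠ 0 ∧ ∀ s t, (π ᵥ* A) s = (π ᵥ* A) t := by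
  have hmulVec : ∀ π k, ((of fun (k : Fin (d - 1)) i => A i ⟨0, hd⟩ - A i ⟨k + 1, by omega⟩) *ᵥ π) k
      = (π ᵥ* A) ⟨0, hd⟩ - (π ᵥ* A) ⟨k + 1, by omega⟩ := fun π k => by
    simp [mulVec, vecMul, dotProduct, mul_sub, mul_comm]
  simp_rw [rank_lt_card_width_iff, funext_iff, hmulVec, Pi.zero_apply, sub_eq_zero,
    Fin.forall_apply_eq_iff_forall_apply_zero_eq hd]

end Matrix

/-- for a two-player game `(X₁, X₂)` of format `(d₁, d₂)` with
`2 ≤ d₁ < d₂` over `ℂ`, the following are equivalent: (a) the Nash equilibrium set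
is nonempty; (b) the `(d₁+1) × d₂` matrix obtained from `X₂` by appending an all-ones
row has rank at most `d₁`; (c) the `(d₂-1) × d₁` difference matrix `B` with
`B_{k,i} = x⁽²⁾_{i,1} - x⁽²⁾_{i,k+1}` has rank at most `d₁ - 1`. -/
theorem two_player_nash_resultant (d1 d2 : ℕ) (hd1 : 2 ≤ d1) (h12 : d1 < d2)
    (X1 X2 : Matrix (Fin d1) (Fin d2) ℂ) :
    let M : Matrix (Fin (d1 + 1)) (Fin d2) ℂ :=
      fun i j => if h : i.1 < d1 then X2 ⟨i.1, h⟩ j else 1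
    let B : Matrix (Fin (d2 - 1)) (Fin d1) ℂ :=
      fun k i => X2 i ⟨0, by omega⟩ - X2 i ⟨k.1 + 1, by have := k.2; omega⟩
    ((∃ (π1 : Fin d1 → ℂ) (π2 : Fin d2 → ℂ), π1 ≠ 0 ∧ π2 ≠ 0 ∧
        (∀ s t, X1.mulVec π2 s = X1.mulVec π2 t) ∧
        (∀ s t, X2.transpose.mulVec π1 s = X2.transpose.mulVec π1 t)) ↔
      M.rank ≤ d1) ∧
    (M.rank ≤ d1 ↔ B.rank ≤ d1 - 1) := by
  intro M B
  have : Nonempty (Fin d2) := ⟨⟨0, by omega⟩⟩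
  obtain ⟨π2, hπ2, hX1π2⟩ : ∃ π2, π2 ≠ 0 ∧ X1 *ᵥ π2 = 0 := by
    rw [← rank_lt_card_width_iff, Fintype.card_fin]
    exact X1.rank_le_height.trans_lt h12
  have hM : M = of (Fin.snoc (α := fun _ => Fin d2 → ℂ) X2 1) := by
    ext i j
    simp only [M, Fin.snoc, of_apply]
    split_ifs <;> rfl
  have hMrank : M.rank ≤ d1 ↔ ∃ π1, π1 ≠ 0 ∧ ∀ s t, (π1 ᵥ* X2) s = (π1 ᵥ* X2) t := by
    rw [hM, Nat.le_iff_lt_add_one]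
    exact rank_of_snoc_one_lt_iff X2
  have hBrank : B.rank ≤ d1 - 1 ↔ ∃ π1, π1 ≠ 0 ∧ ∀ s t, (π1 ᵥ* X2) s = (π1 ᵥ* X2) t := by
    rw [Nat.le_sub_one_iff_lt (by omega)]
    have h := rank_of_col_zero_sub_lt_card_iff (by omega) X2
    rw [Fintype.card_fin] at h
    exact h
  refine ⟨Iff.trans ?_ hMrank.symm, hMrank.trans hBrank.symm⟩
  simp only [mulVec_transpose]
  exact ⟨fun ⟨π1, _, hπ1, _, _, hconst⟩ => ⟨π1, hπ1, hconst⟩,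
    fun ⟨π1, hπ1, hconst⟩ => ⟨π1, π2, hπ1, hπ2, by simp [hX1π2], hconst⟩⟩
end

section
/- Let n ≥ 2 and let d = (d_1, …, d_n) be integers with 2 ≤ d_1 ≤ ⋯ ≤ d_n and d_n − 1 ≤ ∑_{i=1}^{n−1}(d_i − 1). Then there exists a real global section f of E whose zero set Z(f) ⊆ ∏_{i=1}^n ℙ(ℂ^{d_i}) is finite with exactly c(d) elements, every one of which is a real point. -/
/-- A global section of `E = ⊕ᵢ O(𝟙ᵢ)^{⊕(dᵢ-1)}` is a tuple of multilinear forms of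
multidegree `𝟙ᵢ`, each given by its coefficient tensor indexed by the multi-indices
omitting position `i`. -/
def Section (n : ℕ) (d : Fin n → ℕ) : Type :=
  ∀ i : Fin n, Fin (d i - 1) → ((∀ m : {m : Fin n // m ≠ i}, Fin (d m.1)) → ℂ)

/-- Evaluation of a multilinear form of multidegree `𝟙ᵢ` (given by its coefficients `c`)
at the groups of variables `π⁽ᵏ⁾`, `k ≠ i`. -/
noncomputable def evalForm {n : ℕ} (d : Fin n → ℕ) (i : Fin n)
    (c : (∀ m : {m : Fin n // m ≠ i}, Fin (d m.1)) → ℂ)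
    (π : ∀ m : {m : Fin n // m ≠ i}, Fin (d m.1) → ℂ) : ℂ :=
  ∑ j : ∀ m : {m : Fin n // m ≠ i}, Fin (d m.1),
    c j * ∏ m : {m : Fin n // m ≠ i}, π m (j m)

/-- The zero set `Z(f)` of a global section `f` of `E`, as a subset of
`∏ᵢ ℙ(ℂ^{dᵢ})`. -/
def zeroSet {n : ℕ} (d : Fin n → ℕ) (f : Section n d) :
    Set (∀ i : Fin n, Projectivization ℂ (Fin (d i) → ℂ)) :=
  {P | ∃ (π : ∀ k, Fin (d k) → ℂ) (h : ∀ k, π k ≠ 0),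
    (∀ k, P k = Projectivization.mk ℂ (π k) (h k)) ∧
    ∀ (i : Fin n) (j : Fin (d i - 1)),
      evalForm d i (f i j) (fun m => π m.1) = 0}

/-- A point of `∏ᵢ ℙ(ℂ^{dᵢ})` is real if it is the class of a tuple of vectors with
real entries. -/
def IsRealPoint {n : ℕ} (d : Fin n → ℕ)
    (P : ∀ i : Fin n, Projectivization ℂ (Fin (d i) → ℂ)) : Prop :=
  ∃ (π : ∀ k, Fin (d k) → ℂ) (h : ∀ k, π k ≠ 0),
    (∀ k, P k = Projectivization.mk ℂ (π k) (h k)) ∧ ∀ k s, (π k s).im = 0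

/-- A section is real if all of its coefficients are real. -/
def IsRealSection {n : ℕ} (d : Fin n → ℕ) (f : Section n d) : Prop :=
  ∀ i j c, (f i j c).im = 0
/-! Take distinct real nodes `t_{ij}`, one for each component `f^{(i)}_j`, and let `f^{(i)}_j` be
the product over `m ≠ i` of the linear forms `π^{(m)} ↦ p_m(t_{ij})`, where `p_m` is the polynomial
with coefficient vector `π^{(m)}`. A point is a zero iff every node `t_{ij}` is a root of some
`p_m` with `m ≠ i`. Each `p_m` has at most `d_m - 1` roots and there are `∑ₘ (d_m - 1)` nodes, so
such a choice of `m` for every node hits each `m` exactly `d_m - 1` times, which forces `p_m` to be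
a multiple of the real polynomial `∏ (X - t)` over its nodes. Zeros thus correspond bijectively to
these assignments, they are all real, and counting the assignments is expanding
`∏ᵢ (∑_{j ≠ i} h_j)^{d_i - 1}`. -/

open Finset Polynomial

namespace Polynomial

theorem eval_ofFn {R : Type*} [CommSemiring R] [DecidableEq R] (D : ℕ) (w : Fin D → R) (x : R) :
    (ofFn D w).eval x = ∑ s : Fin D, w s * x ^ (s : ℕ) := by
  simp [ofFn_eq_sum_monomial, eval_finsetSum]

theorem ofFn_ne_zero {R : Type*} [Semiring R] [DecidableEq R] {D : ℕ} {w : Fin D → R}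
    (hw : w ≠ 0) : ofFn D w ≠ 0 :=
  (map_ne_zero_iff _ (injective_ofFn D)).2 hw

variable {K : Type*} [Field K] {ι : Type*}

theorem eq_C_leadingCoeff_mul_nodal {s : Finset ι} {v : ι → K} (hv : Set.InjOn v s)
    {q : K[X]} (hq : q ≠ 0) (hdeg : q.natDegree ≤ #s) (hroots : ∀ i ∈ s, q.eval (v i) = 0) :
    q = C q.leadingCoeff * Lagrange.nodal s v := by
  have hdeg_eq : q.degree = #s :=
    le_antisymm (degree_le_natDegree.trans (by exact_mod_cast hdeg))
      (not_lt.1 fun h => hq (eq_zero_of_degree_lt_of_eval_index_eq_zero s hv h hroots))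
  refine eq_of_degree_le_of_eval_index_eq s hv hdeg_eq.le ?_ ?_ ?_
  · rw [degree_C_mul (leadingCoeff_ne_zero.2 hq), Lagrange.degree_nodal, hdeg_eq]
  · rw [leadingCoeff_mul, leadingCoeff_C, Lagrange.nodal_monic.leadingCoeff, mul_one]
  · intro i hi
    rw [eval_mul, Lagrange.eval_nodal_at_node hi, mul_zero, hroots i hi]

theorem toFn_nodal_ne_zero {s : Finset ι} {v : ι → K} {D : ℕ} (hs : #s < D) :
    toFn D (Lagrange.nodal s v) ≠ 0 := by
  intro h
  have := congrFun h ⟨#s, hs⟩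
  simp only [toFn, LinearMap.pi_apply, lcoeff_apply, Pi.zero_apply] at this
  rw [← Lagrange.natDegree_nodal (v := v), Lagrange.nodal_monic.coeff_natDegree] at this
  exact one_ne_zero this

section NodeZeros

variable [DecidableEq K] [Fintype ι] {v : ι → K} {D : ℕ}

theorem card_filter_eval_eq_zero_le (hv : Function.Injective v) {q : K[X]} (hq : q ≠ 0) :
    #{i | q.eval (v i) = 0} ≤ q.natDegree := by
  by_contra! h
  refine hq (eq_zero_of_degree_lt_of_eval_index_eq_zero {i | q.eval (v i) = 0} hv.injOn ?_
    fun i hi => (mem_filter.1 hi).2)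
  exact degree_le_natDegree.trans_lt (by exact_mod_cast h)

noncomputable def nodeZeros (v : ι → K) (w : Fin D → K) : Finset ι :=
  {i | (ofFn D w).eval (v i) = 0}

theorem nodeZeros_smul {a : K} (ha : a ≠ 0) (w : Fin D → K) :
    nodeZeros v (a • w) = nodeZeros v w := by
  simp [nodeZeros, ha]

theorem card_nodeZeros_le (hv : Function.Injective v) {w : Fin D → K} (hw : w ≠ 0) :
    #(nodeZeros v w) ≤ D - 1 := by
  have hD : 1 ≤ D := Nat.one_le_iff_ne_zero.2 fun h => hw (by subst h; exact Subsingleton.elim _ _)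
  exact (card_filter_eval_eq_zero_le hv (ofFn_ne_zero hw)).trans
    (Nat.le_sub_one_of_lt (ofFn_natDegree_lt hD w))

theorem nodeZeros_toFn_nodal (hv : Function.Injective v) {s : Finset ι} (hs : #s < D) :
    nodeZeros v (toFn D (Lagrange.nodal s v)) = s := by
  rw [nodeZeros, ofFn_comp_toFn_eq_id_of_natDegree_lt (Lagrange.natDegree_nodal.trans_lt hs)]
  ext i
  simp [Lagrange.eval_nodal, prod_eq_zero_iff, sub_eq_zero, hv.eq_iff]

theorem exists_smul_toFn_nodal_eq (hv : Function.Injective v) {w : Fin D → K} (hw : w ≠ 0)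
    {s : Finset ι} (hs : #s + 1 = D) (hsub : s ⊆ nodeZeros v w) :
    ∃ a : K, a • toFn D (Lagrange.nodal s v) = w := by
  have hq : ofFn D w = C (ofFn D w).leadingCoeff * Lagrange.nodal s v :=
    eq_C_leadingCoeff_mul_nodal hv.injOn (ofFn_ne_zero hw)
      (Nat.le_of_lt_succ (hs ▸ ofFn_natDegree_lt (by omega) w))
      fun i hi => (mem_filter.1 (hsub hi)).2
  refine ⟨(ofFn D w).leadingCoeff, ?_⟩
  rw [← map_smul, ← C_mul', ← hq, toFn_comp_ofFn_eq_id]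

theorem nodeZeros_eq_of_mk_eq {w w' : Fin D → K} (hw : w ≠ 0) (hw' : w' ≠ 0)
    (h : Projectivization.mk K w hw = Projectivization.mk K w' hw') :
    nodeZeros v w = nodeZeros v w' := by
  obtain ⟨a, rfl⟩ := (Projectivization.mk_eq_mk_iff' K w w' hw hw').1 h
  exact nodeZeros_smul (left_ne_zero_of_smul hw) w'

end NodeZeros

end Polynomial

theorem card_fiber_eq_of_card_fiber_le {ι κ : Type*} [Fintype ι] [Fintype κ] [DecidableEq κ]
    (φ : ι → κ) {b : κ → ℕ} (hle : ∀ k, #{i | φ i = k} ≤ b k)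
    (hcard : Fintype.card ι = ∑ k, b k) (k : κ) : #{i | φ i = k} = b k := by
  refine (sum_eq_sum_iff_of_le fun k _ => hle k).1 ?_ k (mem_univ k)
  rw [← hcard, ← card_univ, card_eq_sum_card_fiberwise fun i _ => mem_univ (φ i)]

abbrev SectionIndex (n : ℕ) (d : Fin n → ℕ) : Type := Σ i : Fin n, Fin (d i - 1)

theorem card_sectionIndex (n : ℕ) (d : Fin n → ℕ) :
    Fintype.card (SectionIndex n d) = ∑ k, (d k - 1) := by
  simp

def admissibleAssignments (n : ℕ) (d : Fin n → ℕ) : Finset (SectionIndex n d → Fin n) :=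
  {φ ∈ Fintype.piFinset fun p => univ.erase p.1 | ∀ k, #{p | φ p = k} = d k - 1}

theorem cCoeff_eq_card_admissibleAssignments (n : ℕ) (d : Fin n → ℕ) :
    cCoeff d = #(admissibleAssignments n d) := by
  have hprod : (∏ i : Fin n,
      (∑ j ∈ univ.erase i, (MvPolynomial.X j : MvPolynomial (Fin n) ℤ)) ^ (d i - 1)) =
      ∏ p : SectionIndex n d, ∑ j ∈ univ.erase p.1, MvPolynomial.X j := by
    rw [← univ_sigma_univ, prod_sigma]
    simp
  rw [cCoeff, hprod, prod_univ_sum]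
  simp only [MvPolynomial.X, ← MvPolynomial.monomial_sum_one, MvPolynomial.coeff_sum,
    MvPolynomial.coeff_monomial]
  rw [sum_boole, admissibleAssignments]
  norm_cast
  congr 2
  ext φ
  simp [Finsupp.ext_iff, Finsupp.finsetSum_apply, Finsupp.single_apply, sum_boole, eq_comm]

section NodeSection

variable {n : ℕ} {d : Fin n → ℕ}

noncomputable def nodeSection (v : SectionIndex n d → ℂ) : Section n d :=
  fun i j c => ∏ m, v ⟨i, j⟩ ^ (c m : ℕ)

theorem evalForm_nodeSection (v : SectionIndex n d → ℂ) (i : Fin n) (j : Fin (d i - 1))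
    (π : ∀ m : {m : Fin n // m ≠ i}, Fin (d m.1) → ℂ) :
    evalForm d i (nodeSection v i j) π = ∏ m, (ofFn (d m.1) (π m)).eval (v ⟨i, j⟩) := by
  simp only [evalForm, nodeSection, eval_ofFn, Fintype.prod_sum, ← prod_mul_distrib]
  exact sum_congr rfl fun c _ => prod_congr rfl fun m _ => mul_comm _ _

theorem evalForm_nodeSection_eq_zero_iff (v : SectionIndex n d → ℂ) (i : Fin n)
    (j : Fin (d i - 1)) (π : ∀ k, Fin (d k) → ℂ) :
    evalForm d i (nodeSection v i j) (fun m => π m.1) = 0 ↔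
      ∃ m ≠ i, ⟨i, j⟩ ∈ nodeZeros v (π m) := by
  rw [evalForm_nodeSection, prod_eq_zero_iff]
  constructor
  · rintro ⟨⟨m, hm⟩, -, h⟩
    exact ⟨m, hm, mem_filter.2 ⟨mem_univ _, h⟩⟩
  · rintro ⟨m, hm, h⟩
    exact ⟨⟨m, hm⟩, mem_univ _, (mem_filter.1 h).2⟩

end NodeSection

section NodalPoint

variable {n : ℕ} {d : Fin n → ℕ} {φ : SectionIndex n d → Fin n}

theorem ne_fst_of_mem_admissibleAssignments (hφ : φ ∈ admissibleAssignments n d)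
    (p : SectionIndex n d) : φ p ≠ p.1 :=
  ne_of_mem_erase (Fintype.mem_piFinset.1 (mem_filter.1 hφ).1 p)

theorem card_fiber_lt_of_mem_admissibleAssignments (hd : ∀ k, 0 < d k)
    (hφ : φ ∈ admissibleAssignments n d) (k : Fin n) : #{p | φ p = k} < d k := by
  rw [(mem_filter.1 hφ).2 k]
  exact Nat.sub_one_lt_of_lt (hd k)

noncomputable def nodalPoint (v : SectionIndex n d → ℂ) (hd : ∀ k, 0 < d k)
    (φ : admissibleAssignments n d) (k : Fin n) : Projectivization ℂ (Fin (d k) → ℂ) :=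
  Projectivization.mk ℂ (toFn (d k) (Lagrange.nodal {p | φ.1 p = k} v))
    (toFn_nodal_ne_zero (card_fiber_lt_of_mem_admissibleAssignments hd φ.2 k))

variable {v : SectionIndex n d → ℂ} (hv : Function.Injective v) (hd : ∀ k, 0 < d k)
include hv hd

theorem nodalPoint_mem_zeroSet (φ : admissibleAssignments n d) :
    nodalPoint v hd φ ∈ zeroSet d (nodeSection v) := by
  set π : ∀ k, Fin (d k) → ℂ := fun k => toFn (d k) (Lagrange.nodal {p | φ.1 p = k} v)
  refine ⟨π, fun k => toFn_nodal_ne_zero (card_fiber_lt_of_mem_admissibleAssignments hd φ.2 k),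
    fun _ => rfl, fun i j => (evalForm_nodeSection_eq_zero_iff v i j π).2 ?_⟩
  refine ⟨φ.1 ⟨i, j⟩, ne_fst_of_mem_admissibleAssignments φ.2 _, ?_⟩
  rw [nodeZeros_toFn_nodal hv (card_fiber_lt_of_mem_admissibleAssignments hd φ.2 _)]
  exact mem_filter.2 ⟨mem_univ _, rfl⟩

theorem mem_range_nodalPoint_of_mem_zeroSet {P : ∀ k, Projectivization ℂ (Fin (d k) → ℂ)}
    (hP : P ∈ zeroSet d (nodeSection v)) : P ∈ Set.range (nodalPoint v hd) := by
  obtain ⟨π, hπ, hPπ, hz⟩ := hP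
  choose φ hφ hroot using fun p : SectionIndex n d =>
    (evalForm_nodeSection_eq_zero_iff v p.1 p.2 π).1 (hz p.1 p.2)
  have hfiber : ∀ k, ({p | φ p = k} : Finset _) ⊆ nodeZeros v (π k) := by
    intro k p hp
    obtain rfl := (mem_filter.1 hp).2
    exact hroot p
  have hcard : ∀ k, #{p | φ p = k} = d k - 1 :=
    card_fiber_eq_of_card_fiber_le φ
      (fun k => (card_le_card (hfiber k)).trans (card_nodeZeros_le hv (hπ k)))
      (card_sectionIndex n d)
  have hadm : φ ∈ admissibleAssignments n d :=
    mem_filter.2 ⟨Fintype.mem_piFinset.2 fun p => mem_erase.2 ⟨hφ p, mem_univ _⟩, hcard⟩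
  refine ⟨⟨φ, hadm⟩, funext fun k => ?_⟩
  rw [hPπ k, nodalPoint, eq_comm, Projectivization.mk_eq_mk_iff']
  refine exists_smul_toFn_nodal_eq hv (hπ k) ?_ (hfiber k)
  rw [hcard k]
  exact Nat.sub_add_cancel (hd k)

theorem zeroSet_nodeSection : zeroSet d (nodeSection v) = Set.range (nodalPoint v hd) :=
  Set.Subset.antisymm (fun _ => mem_range_nodalPoint_of_mem_zeroSet hv hd)
    (Set.range_subset_iff.2 (nodalPoint_mem_zeroSet hv hd))

theorem nodalPoint_injective : Function.Injective (nodalPoint v hd) := by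
  intro φ ψ h
  have hfiber : ∀ k, ({p | φ.1 p = k} : Finset _) = ({p | ψ.1 p = k} : Finset _) := fun k => by
    rw [← nodeZeros_toFn_nodal hv (card_fiber_lt_of_mem_admissibleAssignments hd φ.2 k),
      nodeZeros_eq_of_mk_eq _ _ (congrFun h k),
      nodeZeros_toFn_nodal hv (card_fiber_lt_of_mem_admissibleAssignments hd ψ.2 k)]
  ext p : 2
  have hp : p ∈ ({p' | ψ.1 p' = φ.1 p} : Finset _) :=
    hfiber (φ.1 p) ▸ mem_filter.2 ⟨mem_univ p, rfl⟩
  exact ((mem_filter.1 hp).2).symm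

end NodalPoint

theorem im_coeff_nodal_ofReal {ι : Type*} (s : Finset ι) (t : ι → ℝ) (m : ℕ) :
    ((Lagrange.nodal s fun i => (t i : ℂ)).coeff m).im = 0 := by
  have hmap :
      Lagrange.nodal s (fun i => (t i : ℂ)) = (Lagrange.nodal s t).map Complex.ofRealHom := by
    simp [Lagrange.nodal, Polynomial.map_prod]
  rw [hmap, coeff_map]
  exact Complex.ofReal_im _

theorem isRealSection_nodeSection {n : ℕ} {d : Fin n → ℕ} (t : SectionIndex n d → ℝ) :
    IsRealSection d (nodeSection fun p => (t p : ℂ)) := fun i j c => by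
  simp only [nodeSection, ← Complex.ofReal_pow, ← Complex.ofReal_prod, Complex.ofReal_im]

theorem isRealPoint_nodalPoint {n : ℕ} {d : Fin n → ℕ} (t : SectionIndex n d → ℝ)
    (hd : ∀ k, 0 < d k) (φ : admissibleAssignments n d) :
    IsRealPoint d (nodalPoint (fun p => (t p : ℂ)) hd φ) :=
  ⟨_, _, fun _ => rfl, fun _ _ => im_coeff_nodal_ofReal _ t _⟩

/-- for `2 ≤ d₁ ≤ ⋯ ≤ dₙ` with `dₙ - 1 ≤ ∑_{i=1}^{n-1}(dᵢ - 1)`, there is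
a real global section `f` of `E` whose zero set is finite with exactly `c(d)` points,
all of which are real. -/
theorem exists_real_section_all_real_zeros (n : ℕ) (d : Fin n → ℕ)
    (hd : ∀ i, 2 ≤ d i) :
    ∃ f : Section n d, IsRealSection d f ∧ (zeroSet d f).Finite ∧
      ((zeroSet d f).ncard : ℤ) = cCoeff d ∧
      ∀ P ∈ zeroSet d f, IsRealPoint d P := by
  have hd_pos : ∀ k, 0 < d k := fun k => by have := hd k; omega
  obtain ⟨t, ht⟩ : ∃ t : SectionIndex n d → ℝ, Function.Injective t :=
    ⟨fun p => (Fintype.equivFin _ p : ℕ),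
      Nat.cast_injective.comp (Fin.val_injective.comp (Fintype.equivFin _).injective)⟩
  have hv : Function.Injective fun p => (t p : ℂ) := Complex.ofReal_injective.comp ht
  have hZ := zeroSet_nodeSection hv hd_pos
  refine ⟨_, isRealSection_nodeSection t, ?_, ?_, ?_⟩
  · rw [hZ]
    exact Set.finite_range _
  · rw [hZ, Set.ncard_range_of_injective (nodalPoint_injective hv hd_pos),
      Nat.card_eq_fintype_card, Fintype.card_coe, cCoeff_eq_card_admissibleAssignments]
  · rw [hZ]
    rintro _ ⟨φ, rfl⟩
    exact isRealPoint_nodalPoint t hd_pos φ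
end
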